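/- arXiv:1602.02299 — 5 statements merged into one kernel-verified Lean document; each statement's English description precedes it below -/
import Mathlib

section
/- Let k, M ≥ 1 be integers, let S be the set of leaves of an M-ary tree of height k (i.e., a [k,M]-system), and let X ⊆ S satisfy |X| ≥ ε·M^k for some ε > 0. Then there exists an integer m ≥ ε·M/k and a [k,m]-system S′ with S′ ⊆ X. -/
/-- An `M`-ary tree of height `k`: a prefix-closed set of finite sequences of length
at most `k`, containing the empty sequence, such that every element of length `< k`
has exactly `M` direct continuations. -/
def IsMAryTree (M k : ℕ) (T : Set (List ℕ)) : Prop :=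
  ([] : List ℕ) ∈ T ∧
  (∀ a ∈ T, a.length ≤ k) ∧
  (∀ a ∈ T, ∀ i ≤ a.length, a.take i ∈ T) ∧
  (∀ a ∈ T, a.length < k →
    {σ : ℕ | a ++ [σ] ∈ T}.Finite ∧ {σ : ℕ | a ++ [σ] ∈ T}.ncard = M)

/-- The leaves of a tree of height `k`: its elements of length `k`. -/
def leaves (k : ℕ) (T : Set (List ℕ)) : Set (List ℕ) := {a ∈ T | a.length = k}

/-- A `[k,M]`-system: the set of leaves of some `M`-ary tree of height `k`. -/
def IsSystem (k M : ℕ) (S : Set (List ℕ)) : Prop :=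
  ∃ T : Set (List ℕ), IsMAryTree M k T ∧ S = leaves k T

/-!
Induction on the height. Call a child `σ` of the root good if the part of `X` below `σ`
contains a `[k-1, m]`-system. If at least `m` children are good, grafting `m` of these systems
below a common root gives a `[k, m]`-system inside `X`. Otherwise the at most `m - 1` good
children carry at most `M^(k-1)` points of `X` each, and by induction every other child carries
at most `(k-1)(m-1)M^(k-2)`, so `|X| ≤ k(m-1)M^(k-1)`. With `m = ⌈εM/k⌉` this bound is below
`εM^k ≤ |X|`.
-/

def subtreeAt {α : Type*} (σ : α) (T : Set (List α)) : Set (List α) := (σ :: ·) ⁻¹' T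

@[simp]
lemma mem_subtreeAt {α : Type*} {σ : α} {T : Set (List α)} {a : List α} :
    a ∈ subtreeAt σ T ↔ σ :: a ∈ T := Iff.rfl

lemma ncard_le_sum_ncard_subtreeAt_of_head_mem {α : Type*} {X : Set (List α)} (C : Finset α)
    (hX : ∀ a ∈ X, ∃ σ ∈ C, ∃ b, a = σ :: b) :
    X.ncard ≤ ∑ σ ∈ C, (subtreeAt σ X).ncard := by
  have hX_eq : X = ⋃ σ ∈ C, (σ :: ·) '' subtreeAt σ X := by
    ext a
    simp only [Set.mem_iUnion, Set.mem_image, mem_subtreeAt, exists_prop]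
    constructor
    · intro ha
      obtain ⟨σ, hσ, b, rfl⟩ := hX a ha
      exact ⟨σ, hσ, b, ha, rfl⟩
    · rintro ⟨σ, -, b, hb, rfl⟩
      exact hb
  calc X.ncard = (⋃ σ ∈ C, (σ :: ·) '' subtreeAt σ X).ncard := congrArg _ hX_eq
    _ ≤ ∑ σ ∈ C, ((σ :: ·) '' subtreeAt σ X).ncard := C.set_ncard_biUnion_le _
    _ = ∑ σ ∈ C, (subtreeAt σ X).ncard := by
      refine Finset.sum_congr rfl fun σ _ => ?_
      exact Set.ncard_image_of_injective _ List.cons_injective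

lemma leaves_subtreeAt (k σ : ℕ) (T : Set (List ℕ)) :
    leaves k (subtreeAt σ T) = subtreeAt σ (leaves (k + 1) T) := by
  ext a
  simp [leaves]

lemma subtreeAt_subset_leaves {k : ℕ} {T X : Set (List ℕ)} (hX : X ⊆ leaves (k + 1) T)
    (σ : ℕ) :
    subtreeAt σ X ⊆ leaves k (subtreeAt σ T) := by
  rw [leaves_subtreeAt]
  exact Set.preimage_mono hX

lemma leaves_zero_subset (T : Set (List ℕ)) : leaves 0 T ⊆ {[]} :=
  fun _ ha => List.eq_nil_of_length_eq_zero ha.2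

lemma isSystem_zero (m : ℕ) : IsSystem 0 m {[]} := by
  refine ⟨{[]}, ⟨rfl, ?_, ?_, ?_⟩, ?_⟩
  · rintro a rfl; rfl
  · rintro a rfl i -; simp
  · rintro a rfl h; simp at h
  · ext a; simp [leaves]

lemma isMAryTree_subtreeAt {M k : ℕ} {T : Set (List ℕ)} (hT : IsMAryTree M (k + 1) T) {σ : ℕ}
    (hσ : [σ] ∈ T) : IsMAryTree M k (subtreeAt σ T) := by
  obtain ⟨-, hlen, htake, hcont⟩ := hT
  refine ⟨hσ, fun a ha => ?_, fun a ha i hi => ?_, fun a ha hlt => ?_⟩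
  · simpa using hlen _ ha
  · simpa using htake _ ha (i + 1) (by simpa using hi)
  · exact hcont (σ :: a) ha (by simpa using hlt)

namespace IsMAryTree

variable {M k : ℕ} {T : Set (List ℕ)}

lemma exists_finset_children (hT : IsMAryTree M (k + 1) T) :
    ∃ C : Finset ℕ, C.card = M ∧ ∀ σ, σ ∈ C ↔ [σ] ∈ T := by
  obtain ⟨hfin, hcard⟩ := hT.2.2.2 [] hT.1 k.succ_pos
  refine ⟨hfin.toFinset, ?_, fun σ => by simp⟩
  rw [← Set.ncard_eq_toFinset_card _ hfin, ← hcard]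

lemma exists_eq_cons_of_mem_leaves (hT : IsMAryTree M (k + 1) T) {a : List ℕ}
    (ha : a ∈ leaves (k + 1) T) : ∃ σ b, [σ] ∈ T ∧ a = σ :: b := by
  obtain ⟨haT, hlen⟩ := ha
  obtain ⟨σ, b, rfl⟩ := List.exists_cons_of_length_eq_add_one hlen
  exact ⟨σ, b, by simpa using hT.2.2.1 _ haT 1 (by simp), rfl⟩

lemma ncard_le_sum_ncard_subtreeAt (hT : IsMAryTree M (k + 1) T) {X : Set (List ℕ)}
    (hX : X ⊆ leaves (k + 1) T) {C : Finset ℕ} (hC : ∀ σ, σ ∈ C ↔ [σ] ∈ T) :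
    X.ncard ≤ ∑ σ ∈ C, (subtreeAt σ X).ncard := by
  refine ncard_le_sum_ncard_subtreeAt_of_head_mem C fun a ha => ?_
  obtain ⟨σ, b, hσ, rfl⟩ := hT.exists_eq_cons_of_mem_leaves (hX ha)
  exact ⟨σ, (hC σ).2 hσ, b, rfl⟩

theorem ncard_le_pow (hT : IsMAryTree M k T) {X : Set (List ℕ)} (hX : X ⊆ leaves k T) :
    X.ncard ≤ M ^ k := by
  induction k generalizing T X with
  | zero =>
    calc X.ncard ≤ ({[]} : Set (List ℕ)).ncard :=
          Set.ncard_le_ncard (hX.trans (leaves_zero_subset T))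
      _ = M ^ 0 := by simp
  | succ k ih =>
    obtain ⟨C, hCcard, hC⟩ := hT.exists_finset_children
    calc X.ncard ≤ ∑ σ ∈ C, (subtreeAt σ X).ncard :=
          hT.ncard_le_sum_ncard_subtreeAt hX hC
      _ ≤ ∑ σ ∈ C, M ^ k := Finset.sum_le_sum fun σ hσ =>
          ih (isMAryTree_subtreeAt hT ((hC σ).1 hσ)) (subtreeAt_subset_leaves hX σ)
      _ = M ^ (k + 1) := by rw [Finset.sum_const, hCcard, smul_eq_mul, pow_succ']

end IsMAryTree

def graft (G : Finset ℕ) (T : ℕ → Set (List ℕ)) : Set (List ℕ) :=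
  insert [] (⋃ σ ∈ G, (σ :: ·) '' T σ)

section graft

variable {G : Finset ℕ} {T : ℕ → Set (List ℕ)}

@[simp]
lemma nil_mem_graft : [] ∈ graft G T := Set.mem_insert _ _

@[simp]
lemma cons_mem_graft {σ : ℕ} {b : List ℕ} :
    σ :: b ∈ graft G T ↔ σ ∈ G ∧ b ∈ T σ := by
  simp [graft, and_comm]

lemma isMAryTree_graft {m k : ℕ} (hG : G.card = m) (hT : ∀ σ ∈ G, IsMAryTree m k (T σ)) :
    IsMAryTree m (k + 1) (graft G T) := by
  refine ⟨nil_mem_graft, ?_, ?_, ?_⟩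
  · rintro (_ | ⟨σ, b⟩) h
    · simp
    · rw [cons_mem_graft] at h
      simpa using (hT σ h.1).2.1 b h.2
  · rintro (_ | ⟨σ, b⟩) h (_ | i) hi
    · simp
    · simp
    · simp
    · rw [cons_mem_graft] at h
      simpa [h.1] using (hT σ h.1).2.2.1 b h.2 i (by simpa using hi)
  · rintro (_ | ⟨σ, b⟩) h hlen
    · have hchildren : {τ | [] ++ [τ] ∈ graft G T} = G := by
        ext τ
        simpa using fun hτ => (hT τ hτ).1
      rw [hchildren]
      exact ⟨G.finite_toSet, by rw [Set.ncard_coe_finset, hG]⟩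
    · rw [cons_mem_graft] at h
      have hchildren : {τ | σ :: b ++ [τ] ∈ graft G T} = {τ | b ++ [τ] ∈ T σ} := by
        ext τ
        simp [h.1]
      rw [hchildren]
      exact (hT σ h.1).2.2.2 b h.2 (by simpa using hlen)

lemma leaves_graft (k : ℕ) :
    leaves (k + 1) (graft G T) = ⋃ σ ∈ G, (σ :: ·) '' leaves k (T σ) := by
  ext (_ | ⟨σ, b⟩)
  · simp [leaves]
  · simp only [leaves, Set.mem_ofPred_eq, cons_mem_graft, Set.mem_iUnion, Set.mem_image]
    grind

end graft

lemma isSystem_biUnion_cons {k m : ℕ} {G : Finset ℕ} (hG : G.card = m)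
    {S : ℕ → Set (List ℕ)} (hS : ∀ σ ∈ G, IsSystem k m (S σ)) :
    IsSystem (k + 1) m (⋃ σ ∈ G, (σ :: ·) '' S σ) := by
  choose! T hT hST using hS
  refine ⟨graft G T, isMAryTree_graft hG hT, ?_⟩
  rw [leaves_graft]
  exact Set.iUnion₂_congr fun σ hσ => by rw [hST σ hσ]

lemma exists_isSystem_subset_of_le_card {k m : ℕ} {X : Set (List ℕ)} {G : Finset ℕ}
    (hG : m ≤ G.card) (hsub : ∀ σ ∈ G, ∃ S', IsSystem k m S' ∧ S' ⊆ subtreeAt σ X) :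
    ∃ S', IsSystem (k + 1) m S' ∧ S' ⊆ X := by
  obtain ⟨G₀, hG₀G, hG₀card⟩ := Finset.exists_subset_card_eq hG
  choose! S hS hSX using fun σ hσ => hsub σ (hG₀G hσ)
  exact ⟨_, isSystem_biUnion_cons hG₀card hS,
    Set.iUnion₂_subset fun σ hσ => Set.image_subset_iff.2 (hSX σ hσ)⟩

theorem IsMAryTree.exists_isSystem_subset_of_lt_ncard {M k m : ℕ} {T X : Set (List ℕ)}
    (hT : IsMAryTree M k T) (hX : X ⊆ leaves k T)
    (hlt : k * (m - 1) * M ^ (k - 1) < X.ncard) : ∃ S', IsSystem k m S' ∧ S' ⊆ X := by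
  induction k generalizing T X with
  | zero =>
    obtain ⟨x, hx⟩ := Set.nonempty_of_ncard_ne_zero (by omega : X.ncard ≠ 0)
    obtain rfl : x = [] := leaves_zero_subset T (hX hx)
    exact ⟨{[]}, isSystem_zero m, Set.singleton_subset_iff.2 hx⟩
  | succ k ih =>
    classical
    obtain ⟨C, hCcard, hC⟩ := hT.exists_finset_children
    set G := C.filter fun σ => ∃ S', IsSystem k m S' ∧ S' ⊆ subtreeAt σ X
    by_cases hmG : m ≤ G.card
    · exact exists_isSystem_subset_of_le_card hmG fun σ hσ => (Finset.mem_filter.1 hσ).2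
    · refine absurd hlt (not_lt.2 ?_)
      have hbound : ∀ σ ∈ C, (subtreeAt σ X).ncard ≤
          (if σ ∈ G then M ^ k else 0) + k * (m - 1) * M ^ (k - 1) := by
        intro σ hσ
        have hsub := isMAryTree_subtreeAt hT ((hC σ).1 hσ)
        by_cases hσG : σ ∈ G
        · rw [if_pos hσG]
          exact (hsub.ncard_le_pow (subtreeAt_subset_leaves hX σ)).trans le_self_add
        · rw [if_neg hσG, zero_add]
          exact not_lt.1 fun h =>
            hσG (Finset.mem_filter.2 ⟨hσ, ih hsub (subtreeAt_subset_leaves hX σ) h⟩)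
      have hpow : M * (k * (m - 1) * M ^ (k - 1)) = k * (m - 1) * M ^ k := by
        rcases k with _ | k
        · simp
        · rw [Nat.add_sub_cancel, pow_succ]; ring
      calc X.ncard ≤ ∑ σ ∈ C, (subtreeAt σ X).ncard :=
            hT.ncard_le_sum_ncard_subtreeAt hX hC
        _ ≤ ∑ σ ∈ C, ((if σ ∈ G then M ^ k else 0) + k * (m - 1) * M ^ (k - 1)) :=
          Finset.sum_le_sum hbound
        _ = G.card * M ^ k + k * (m - 1) * M ^ k := by
          rw [Finset.sum_add_distrib, Finset.sum_ite_mem,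
            Finset.inter_eq_right.2 (Finset.filter_subset _ _), Finset.sum_const, Finset.sum_const,
            hCcard, smul_eq_mul, smul_eq_mul, hpow]
        _ ≤ (m - 1) * M ^ k + k * (m - 1) * M ^ k := by gcongr; omega
        _ = (k + 1) * (m - 1) * M ^ (k + 1 - 1) := by rw [Nat.add_sub_cancel]; ring

theorem stmt0 (k M : ℕ) (hk : 1 ≤ k) (hM : 1 ≤ M) (S X : Set (List ℕ))
    (hS : IsSystem k M S) (hX : X ⊆ S) (ε : ℝ) (hε : 0 < ε)
    (hcard : ε * (M : ℝ) ^ k ≤ (X.ncard : ℝ)) :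
    ∃ m : ℕ, ε * (M : ℝ) / (k : ℝ) ≤ (m : ℝ) ∧
      ∃ S' : Set (List ℕ), IsSystem k m S' ∧ S' ⊆ X := by
  obtain ⟨T, hT, rfl⟩ := hS
  have hk' : (0 : ℝ) < k := by exact_mod_cast hk
  have hM' : (0 : ℝ) < M := by exact_mod_cast hM
  set m := ⌈ε * M / k⌉₊
  refine ⟨m, Nat.le_ceil _, hT.exists_isSystem_subset_of_lt_ncard hX ?_⟩
  have hm : ((m - 1 : ℕ) : ℝ) < ε * M / k := by
    rw [Nat.cast_pred (Nat.ceil_pos.2 (by positivity))]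
    linarith [Nat.ceil_lt_add_one (by positivity : 0 ≤ ε * M / k)]
  have hlt : ((k * (m - 1) * M ^ (k - 1) : ℕ) : ℝ) < X.ncard :=
    calc ((k * (m - 1) * M ^ (k - 1) : ℕ) : ℝ) = k * ((m - 1 : ℕ) : ℝ) * M ^ (k - 1) := by
          push_cast; ring
      _ < k * (ε * M / k) * M ^ (k - 1) := by gcongr
      _ = ε * M ^ k := by
          rw [mul_div_cancel₀ _ hk'.ne', mul_assoc, ← pow_succ', Nat.sub_add_cancel hk]
      _ ≤ X.ncard := hcard
  exact_mod_cast hlt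
end

section
/- For every colouring φ of the edges of the complete graph K_5 with colours from {1,2,3}, there exists a triangle whose multiset of edge colours is not an element of the palette P = {{1,1,2}, {2,2,3}, {3,3,1}}. -/
/-!
Write colours as natural numbers. Each pattern of the palette has colour sum `4` or `7`, so if every
triangle were coloured from the palette, every triangle would have colour sum `≡ 1 (mod 3)`. Adding
this over the ten triangles of `K₅` gives `10 ≡ 1 (mod 3)`, yet each edge lies in exactly three
triangles, so the total is three times the sum of all edge colours, `≡ 0 (mod 3)`.
-/

lemma sum_mod_three_of_mem_palette {a b c : ℕ}
    (h : ({a, b, c} : Multiset ℕ) ∈ ({{1, 1, 2}, {2, 2, 3}, {3, 3, 1}} : Set (Multiset ℕ))) :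
    (a + b + c) % 3 = 1 := by
  simp only [Set.mem_insert_iff, Set.mem_singleton_iff] at h
  rcases h with h | h | h <;>
    · have hsum := congrArg Multiset.sum h
      simp only [Multiset.insert_eq_cons, Multiset.sum_cons, Multiset.sum_singleton] at hsum
      omega

lemma not_forall_triangle_sum_mod_three_eq_one (φ : Fin 5 → Fin 5 → ℕ) :
    ¬ ∀ x y z : Fin 5, x < y → y < z → (φ x y + φ x z + φ y z) % 3 = 1 := by
  intro h
  have := h 0 1 2; have := h 0 1 3; have := h 0 1 4; have := h 0 2 3; have := h 0 2 4
  have := h 0 3 4; have := h 1 2 3; have := h 1 2 4; have := h 1 3 4; have := h 2 3 4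
  simp only [Fin.reduceLT, forall_const] at *
  omega

theorem stmt6_general (φ : Fin 5 → Fin 5 → ℕ) :
    ∃ x y z : Fin 5, x ≠ y ∧ x ≠ z ∧ y ≠ z ∧
      ({φ x y, φ x z, φ y z} : Multiset ℕ) ∉
        ({{1, 1, 2}, {2, 2, 3}, {3, 3, 1}} : Set (Multiset ℕ)) := by
  by_contra! h
  refine not_forall_triangle_sum_mod_three_eq_one φ fun x y z hxy hyz => ?_
  exact sum_mod_three_of_mem_palette
    (h x y z hxy.ne (hxy.trans hyz).ne hyz.ne)

theorem stmt6 (φ : Fin 5 → Fin 5 → ℕ) (hsymm : ∀ x y, φ x y = φ y x)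
    (hcol : ∀ x y : Fin 5, x ≠ y → φ x y ∈ ({1, 2, 3} : Set ℕ)) :
    ∃ x y z : Fin 5, x ≠ y ∧ x ≠ z ∧ y ≠ z ∧
      ({φ x y, φ x z, φ y z} : Multiset ℕ) ∉
        ({{1, 1, 2}, {2, 2, 3}, {3, 3, 1}} : Set (Multiset ℕ)) :=
  stmt6_general φ
end

section
/- For every integer r ≥ 2, a reduced hypergraph A contains an [r,2]-fortress if and only if A contains a clique of order 2^r. -/
/-- For `c ∈ T`, the set `Q(c)` of sequences `d` of the same length as `c` such that
for each `i`, the `i`-th entry of `d` is a successor of `c|(i-1)` in `T` different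
from the `i`-th entry of `c`. -/
def Qset (T : Set (List ℕ)) (c : List ℕ) : Set (List ℕ) :=
  {d | d.length = c.length ∧
    ∀ i < c.length, (c.take i ++ [d.getD i 0]) ∈ T ∧ d.getD i 0 ≠ c.getD i 0}

/-- The longest common initial segment of two finite sequences. -/
def lcis : List ℕ → List ℕ → List ℕ
  | x :: xs, y :: ys => if x = y then x :: lcis xs ys else []
  | _, _ => []

/-- A reduced hypergraph: an index set `I`, for each pair of distinct indices a finite
nonempty vertex class `P i j = P j i` (disjoint for distinct pairs), and for each triple
of distinct indices a tripartite 3-uniform hypergraph (its constituent) with vertex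
classes `P i j`, `P i k`, `P j k`; `Edg i j k p q r` says that `{p, q, r}` with
`p ∈ P i j`, `q ∈ P i k`, `r ∈ P j k` is a hyperedge of the constituent. -/
structure ReducedHypergraph (I V : Type*) where
  P : I → I → Set V
  Pfin : ∀ i j, (P i j).Finite
  Pne : ∀ i j, i ≠ j → (P i j).Nonempty
  Psymm : ∀ i j, P i j = P j i
  Pdisj : ∀ i j k l, i ≠ j → k ≠ l → ({i, j} : Set I) ≠ {k, l} → Disjoint (P i j) (P k l)
  Edg : I → I → I → V → V → V → Prop
  Edg_mem : ∀ i j k p q r, Edg i j k p q r → p ∈ P i j ∧ q ∈ P i k ∧ r ∈ P j k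
  Edg_symm12 : ∀ i j k p q r, Edg i j k p q r → Edg j i k p r q
  Edg_symm23 : ∀ i j k p q r, Edg i j k p q r → Edg i k j q p r

/-- A `[k,M]`-system, given by the leaves of the tree `T` labelled injectively into the
index set via `e`, supports a fortress in `A` if there is a choice of vertices
`Pv a b d ∈ P (e a) (e b)` for distinct leaves `a, b` and `d ∈ Q(a ∧ b)`, such that
for all distinct leaves `a, b, c` with `s := |a ∧ b| = |a ∧ c| < |b ∧ c|` and all
`d ∈ Q(b ∧ c)` with `d(s+1) = a(s+1)`, the triple
`{Pv a b (d|s), Pv a c (d|s), Pv b c d}` is a hyperedge of the constituent on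
`(e a, e b, e c)`. -/
def SupportsFortress {I V : Type*} (A : ReducedHypergraph I V) (k M : ℕ)
    (T : Set (List ℕ)) (e : List ℕ → I) : Prop :=
  IsMAryTree M k T ∧ Set.InjOn e (leaves k T) ∧
  ∃ Pv : List ℕ → List ℕ → List ℕ → V,
    (∀ a ∈ leaves k T, ∀ b ∈ leaves k T, a ≠ b → ∀ d ∈ Qset T (lcis a b),
        Pv a b d ∈ A.P (e a) (e b) ∧ Pv a b d = Pv b a d) ∧
    (∀ a ∈ leaves k T, ∀ b ∈ leaves k T, ∀ c ∈ leaves k T,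
      a ≠ b → a ≠ c → b ≠ c →
      (lcis a b).length = (lcis a c).length →
      (lcis a b).length < (lcis b c).length →
      ∀ d ∈ Qset T (lcis b c),
        d.getD (lcis a b).length 0 = a.getD (lcis a b).length 0 →
        A.Edg (e a) (e b) (e c)
          (Pv a b (d.take (lcis a b).length))
          (Pv a c (d.take (lcis a b).length))
          (Pv b c d))

/-- `A` contains a `[k,M]`-fortress if some `[k,M]`-system in its index set supports a
fortress. -/
def ContainsFortress {I V : Type*} (A : ReducedHypergraph I V) (k M : ℕ) : Prop :=
  ∃ (T : Set (List ℕ)) (e : List ℕ → I), SupportsFortress A k M T e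

/-- `A` contains a clique of order `t`: a set `J` of `t` indices together with one vertex
`f i j ∈ P i j` for each pair of distinct `i, j ∈ J` such that all triples of chosen
vertices are hyperedges of the corresponding constituents. -/
def HasClique {I V : Type*} (A : ReducedHypergraph I V) (t : ℕ) : Prop :=
  ∃ (J : Finset I) (f : I → I → V), J.card = t ∧ (∀ i j, f i j = f j i) ∧
    (∀ i ∈ J, ∀ j ∈ J, i ≠ j → f i j ∈ A.P i j) ∧
    (∀ i ∈ J, ∀ j ∈ J, ∀ k ∈ J, i ≠ j → i ≠ k → j ≠ k →
      A.Edg i j k (f i j) (f i k) (f j k))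


/-!
In a binary tree every `Q(c)` consists of a single sequence (at each level there is exactly
one sibling to choose), and the side condition `d(s+1) = a(s+1)` of a fortress holds
automatically, because `d(s+1)` and `a(s+1)` are both children of the same node different
from `b(s+1)`. So a fortress on the leaves of a binary tree of height `r` amounts to one vertex
for each pair of leaves. Any three leaves form an isosceles triangle for the ultrametric given
by the depth of their longest common initial segments, with the odd leaf uniquely determined,
and the fortress condition in that orientation is exactly the clique condition for the
triple. Conversely, a clique of order `2 ^ r` labels the `2 ^ r` leaves of the complete binary
tree of height `r`, and then its vertices form a fortress that ignores `d`.
-/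

open Set

theorem lcis_comm : ∀ a b : List ℕ, lcis a b = lcis b a
  | x :: xs, y :: ys => by
    by_cases h : x = y
    · subst h; simp [lcis, lcis_comm xs ys]
    · simp [lcis, h, Ne.symm h]
  | [], [] | [], _ :: _ | _ :: _, [] => rfl

theorem lcis_prefix_left : ∀ a b : List ℕ, lcis a b <+: a
  | x :: xs, y :: ys => by
    by_cases h : x = y
    · subst h; simpa [lcis] using lcis_prefix_left xs ys
    · simp [lcis, h]
  | [], _ | _ :: _, [] => by simp [lcis]

theorem lcis_prefix_right (a b : List ℕ) : lcis a b <+: b :=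
  lcis_comm a b ▸ lcis_prefix_left b a

theorem lcis_eq_take_left (a b : List ℕ) : lcis a b = a.take (lcis a b).length :=
  List.prefix_iff_eq_take.mp (lcis_prefix_left a b)

theorem lcis_eq_take_right (a b : List ℕ) : lcis a b = b.take (lcis a b).length :=
  List.prefix_iff_eq_take.mp (lcis_prefix_right a b)

theorem take_eq_take_iff_le_length_lcis :
    ∀ {a b : List ℕ} {s : ℕ}, s ≤ a.length → s ≤ b.length →
      (a.take s = b.take s ↔ s ≤ (lcis a b).length)
  | _, _, 0, _, _ => by simp
  | x :: xs, y :: ys, s + 1, ha, hb => by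
    by_cases h : x = y
    · subst h
      simp [lcis, take_eq_take_iff_le_length_lcis (a := xs) (b := ys) (s := s)
        (by simpa using ha) (by simpa using hb)]
    · simp [lcis, h]
  | [], _, _ + 1, ha, _ => by simp at ha
  | _ :: _, [], _ + 1, _, hb => by simp at hb

theorem lcis_eq_of_length_eq {a b c : List ℕ} (h : (lcis a b).length = (lcis a c).length) :
    lcis a b = lcis a c := by
  rw [lcis_eq_take_left a b, lcis_eq_take_left a c, h]

theorem length_lcis_lt_of_ne {a b : List ℕ} (hl : a.length = b.length) (hab : a ≠ b) :
    (lcis a b).length < a.length := by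
  by_contra! h
  refine hab ?_
  have := (take_eq_take_iff_le_length_lcis (a := a) (b := b) le_rfl hl.le).mpr h
  rwa [List.take_length, hl, List.take_length] at this

theorem getD_length_lcis_ne {a b : List ℕ} (ha : (lcis a b).length < a.length)
    (hb : (lcis a b).length < b.length) :
    a.getD (lcis a b).length 0 ≠ b.getD (lcis a b).length 0 := by
  intro h
  have htake : a.take ((lcis a b).length + 1) = b.take ((lcis a b).length + 1) := by
    rw [List.take_add_one, List.take_add_one, ← lcis_eq_take_left, ← lcis_eq_take_right,
      List.getElem?_eq_getElem ha, List.getElem?_eq_getElem hb]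
    simp_all
  have := (take_eq_take_iff_le_length_lcis ha hb).mp htake
  omega

theorem min_length_lcis_le (a b c : List ℕ) :
    min (lcis a b).length (lcis b c).length ≤ (lcis a c).length := by
  have hab := (lcis_prefix_left a b).length_le
  have hba := (lcis_prefix_right a b).length_le
  have hcb := (lcis_prefix_right b c).length_le
  have hb := (take_eq_take_iff_le_length_lcis (a := a) (b := b)
    (s := min (lcis a b).length (lcis b c).length) (by omega) (by omega)).mpr (min_le_left _ _)
  have hc := (take_eq_take_iff_le_length_lcis (a := b) (b := c)
    (s := min (lcis a b).length (lcis b c).length) (by omega) (by omega)).mpr (min_le_right _ _)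
  exact (take_eq_take_iff_le_length_lcis (by omega) (by omega)).mp (hb.trans hc)

theorem Set.eq_of_ne_of_ne_of_ncard_eq_two {α : Type*} {S : Set α} (hS : S.ncard = 2)
    {x y z : α} (hx : x ∈ S) (hy : y ∈ S) (hz : z ∈ S) (hxz : x ≠ z) (hyz : y ≠ z) :
    x = y := by
  by_contra hxy
  have hfin : S.Finite := finite_of_ncard_pos (by omega)
  have := (two_lt_ncard_iff hfin).mpr ⟨x, y, z, hx, hy, hz, hxy, hxz, hyz⟩
  omega

def children (T : Set (List ℕ)) (c : List ℕ) : Set ℕ := {σ | c ++ [σ] ∈ T}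

namespace IsMAryTree

variable {M k : ℕ} {T : Set (List ℕ)}

theorem mem_of_prefix (hT : IsMAryTree M k T) {a p : List ℕ} (ha : a ∈ T) (hp : p <+: a) :
    p ∈ T := by
  rw [List.prefix_iff_eq_take.mp hp]
  exact hT.2.2.1 a ha _ hp.length_le

theorem getD_mem_children (hT : IsMAryTree M k T) {a : List ℕ} (ha : a ∈ T) {i : ℕ}
    (hi : i < a.length) : a.getD i 0 ∈ children T (a.take i) := by
  refine hT.mem_of_prefix ha ?_
  rw [List.getD_eq_getElem _ _ hi, List.take_concat_get']
  exact List.take_prefix _ _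

theorem ncard_children_take (hT : IsMAryTree M k T) {a : List ℕ} (ha : a ∈ T) {i : ℕ}
    (hi : i < a.length) : (children T (a.take i)).ncard = M :=
  (hT.2.2.2 _ (hT.mem_of_prefix ha (List.take_prefix i a))
    (by simp only [List.length_take]; have := hT.2.1 a ha; omega)).2

theorem encard_level (hT : IsMAryTree M k T) {n : ℕ} (hn : n ≤ k) :
    {a ∈ T | a.length = n}.encard = (M ^ n : ℕ) := by
  induction n with
  | zero =>
    have : {a ∈ T | a.length = 0} = {[]} := by
      ext a; simp only [mem_ofPred_eq, List.length_eq_zero_iff, mem_singleton_iff]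
      exact ⟨And.right, fun h => ⟨h ▸ hT.1, h⟩⟩
    rw [this]; simp
  | succ n ih =>
    have hfin : {a ∈ T | a.length = n}.Finite := finite_of_encard_eq_coe (ih (by omega))
    have hsplit : {a ∈ T | a.length = n + 1} =
        ⋃ b ∈ {a ∈ T | a.length = n}, (b ++ [·]) '' children T b := by
      ext a
      simp only [mem_ofPred_eq, mem_iUnion, mem_image, exists_prop]
      constructor
      · rintro ⟨ha, hl⟩
        refine ⟨a.take n, ⟨hT.mem_of_prefix ha (List.take_prefix n a), by simp [hl]⟩,
          a.getD n 0, hT.getD_mem_children ha (by omega), ?_⟩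
        rw [List.getD_eq_getElem _ _ (by omega), List.take_concat_get', ← hl, List.take_length]
      · rintro ⟨b, ⟨-, hb⟩, σ, hσ, rfl⟩
        exact ⟨hσ, by simp [hb]⟩
    have hdisj : {a ∈ T | a.length = n}.PairwiseDisjoint
        (fun b => (b ++ [·]) '' children T b) := by
      intro b _ c _ hbc
      refine disjoint_left.mpr ?_
      rintro _ ⟨σ, -, rfl⟩ ⟨τ, -, h⟩
      exact hbc (List.append_inj' h rfl).1.symm
    have hcard : ∀ b ∈ {a ∈ T | a.length = n}, ((b ++ [·]) '' children T b).encard = M := by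
      rintro b ⟨hb, hl⟩
      obtain ⟨hfin, hM⟩ : (children T b).Finite ∧ (children T b).ncard = M :=
        hT.2.2.2 b hb (by omega)
      have hinj : Function.Injective (b ++ [·]) := fun _ _ h => by simpa using h
      rw [hinj.encard_image,
        ← hfin.cast_ncard_eq]
      exact congrArg _ hM
    rw [hsplit, hfin.encard_biUnion hdisj, finsum_mem_congr rfl hcard,
      finsum_mem_eq_finite_toFinset_sum _ hfin, Finset.sum_const, nsmul_eq_mul,
      ← hfin.encard_eq_coe_toFinset_card, ih (by omega), pow_succ, Nat.cast_mul]

theorem encard_leaves (hT : IsMAryTree M k T) : (leaves k T).encard = (M ^ k : ℕ) :=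
  hT.encard_level le_rfl

theorem Qset_nonempty (hT : IsMAryTree M k T) (hM : 2 ≤ M) {c : List ℕ} (hc : c ∈ T) :
    (Qset T c).Nonempty := by
  have hsibling : ∀ i < c.length, ∃ σ ∈ children T (c.take i), σ ≠ c.getD i 0 :=
    fun i hi => exists_ne_of_one_lt_ncard (by rw [hT.ncard_children_take hc hi]; omega) _
  choose! σ hσ hσne using hsibling
  refine ⟨(List.range c.length).map σ, by simp, fun i hi => ?_⟩
  have : ((List.range c.length).map σ).getD i 0 = σ i := by
    simp [List.getD_eq_getElem?_getD, hi]
  rw [this]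
  exact ⟨hσ i hi, hσne i hi⟩

theorem Qset_subsingleton (hT : IsMAryTree 2 k T) {c : List ℕ} (hc : c ∈ T) :
    (Qset T c).Subsingleton := by
  rintro d ⟨hdl, hd⟩ d' ⟨hdl', hd'⟩
  refine List.ext_getElem (hdl.trans hdl'.symm) fun i hi hi' => ?_
  have hic : i < c.length := hdl ▸ hi
  have := eq_of_ne_of_ne_of_ncard_eq_two (hT.ncard_children_take hc hic) (hd i hic).1
    (hd' i hic).1 (hT.getD_mem_children hc hic) (hd i hic).2 (hd' i hic).2
  rwa [List.getD_eq_getElem _ _ hi, List.getD_eq_getElem _ _ hi'] at this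

end IsMAryTree

theorem take_mem_Qset {T : Set (List ℕ)} {c d : List ℕ} (hd : d ∈ Qset T c) {s : ℕ}
    (hs : s ≤ c.length) : d.take s ∈ Qset T (c.take s) := by
  obtain ⟨hdl, hd⟩ := hd
  refine ⟨by simp [hdl], fun i hi => ?_⟩
  have his : i < s := by simp only [List.length_take] at hi; omega
  simpa [List.take_take, his.le, List.getD_eq_getElem?_getD, List.getElem?_take, his]
    using hd i (by omega)

theorem take_lcis_of_length_lcis_le {a b c : List ℕ}
    (h : (lcis a b).length ≤ (lcis b c).length) :
    (lcis b c).take (lcis a b).length = lcis a b := by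
  rw [lcis_eq_take_left b c, List.take_take, min_eq_left h, ← lcis_eq_take_right]

theorem take_mem_Qset_lcis {T : Set (List ℕ)} {a b c d : List ℕ}
    (hlt : (lcis a b).length < (lcis b c).length) (hd : d ∈ Qset T (lcis b c)) :
    d.take (lcis a b).length ∈ Qset T (lcis a b) := by
  simpa [take_lcis_of_length_lcis_le hlt.le] using take_mem_Qset hd hlt.le

namespace IsMAryTree

variable {k : ℕ} {T : Set (List ℕ)}

theorem getD_eq_of_mem_Qset_lcis (hT : IsMAryTree 2 k T) {a b c d : List ℕ}
    (ha : a ∈ leaves k T) (hb : b ∈ leaves k T) (hab : a ≠ b)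
    (hlt : (lcis a b).length < (lcis b c).length) (hd : d ∈ Qset T (lcis b c)) :
    d.getD (lcis a b).length 0 = a.getD (lcis a b).length 0 := by
  have hl : a.length = b.length := ha.2.trans hb.2.symm
  have hsa : (lcis a b).length < a.length := length_lcis_lt_of_ne hl hab
  have hsb : (lcis a b).length < b.length := hl ▸ hsa
  have hbc : lcis b c ∈ T := hT.mem_of_prefix hb.1 (lcis_prefix_left b c)
  have hnode : (lcis b c).take (lcis a b).length = a.take (lcis a b).length :=
    (take_lcis_of_length_lcis_le hlt.le).trans (lcis_eq_take_left a b)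
  have hbs : (lcis b c).getD (lcis a b).length 0 = b.getD (lcis a b).length 0 := by
    rw [List.getD_eq_getElem _ _ hlt, List.getD_eq_getElem _ _ hsb,
      (lcis_prefix_left b c).getElem]
  refine eq_of_ne_of_ne_of_ncard_eq_two (hT.ncard_children_take hbc hlt) (hd.2 _ hlt).1 ?_
    (hT.getD_mem_children hbc hlt) (hd.2 _ hlt).2 ?_
  · rw [hnode]; exact hT.getD_mem_children ha.1 hsa
  · rw [hbs]; exact getD_length_lcis_ne hsa hsb

theorem lcis_trichotomy (hT : IsMAryTree 2 k T) {a b c : List ℕ}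
    (ha : a ∈ leaves k T) (hb : b ∈ leaves k T) (hc : c ∈ leaves k T)
    (hab : a ≠ b) :
    ((lcis a b).length = (lcis a c).length ∧ (lcis a b).length < (lcis b c).length) ∨
    ((lcis b a).length = (lcis b c).length ∧ (lcis b a).length < (lcis a c).length) ∨
    ((lcis c a).length = (lcis c b).length ∧ (lcis c a).length < (lcis a b).length) := by
  have h₁ := min_length_lcis_le a b c
  have h₂ := min_length_lcis_le b a c
  have h₃ := min_length_lcis_le a c b
  rw [lcis_comm b a] at h₂ ⊢
  rw [lcis_comm c b] at h₃ ⊢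
  rw [lcis_comm c a]
  by_cases hall : (lcis a b).length = (lcis a c).length ∧
    (lcis a b).length = (lcis b c).length
  · exfalso
    obtain ⟨hac', hbc'⟩ := hall
    have hsa : (lcis a b).length < a.length := length_lcis_lt_of_ne (ha.2.trans hb.2.symm) hab
    have hsb : (lcis a b).length < b.length := (ha.2.trans hb.2.symm) ▸ hsa
    have hsc : (lcis a b).length < c.length := (ha.2.trans hc.2.symm) ▸ hsa
    have hbnode : b.take (lcis a b).length = a.take (lcis a b).length :=
      (lcis_eq_take_right a b).symm.trans (lcis_eq_take_left a b)
    have hcnode : c.take (lcis a b).length = a.take (lcis a b).length := by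
      rw [hac']; exact (lcis_eq_take_right a c).symm.trans (lcis_eq_take_left a c)
    have hacs : a.getD (lcis a b).length 0 ≠ c.getD (lcis a b).length 0 := by
      rw [hac']; exact getD_length_lcis_ne (hac' ▸ hsa) (hac' ▸ hsc)
    have hbcs : b.getD (lcis a b).length 0 ≠ c.getD (lcis a b).length 0 := by
      rw [hbc']; exact getD_length_lcis_ne (hbc' ▸ hsb) (hbc' ▸ hsc)
    refine getD_length_lcis_ne hsa hsb (eq_of_ne_of_ne_of_ncard_eq_two
      (hT.ncard_children_take ha.1 hsa) (hT.getD_mem_children ha.1 hsa) ?_ ?_ hacs hbcs)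
    · rw [← hbnode]; exact hT.getD_mem_children hb.1 hsb
    · rw [← hcnode]; exact hT.getD_mem_children hc.1 hsc
  · omega

theorem edg_of_edg_of_lcis {I V : Type*} (hT : IsMAryTree 2 k T) (A : ReducedHypergraph I V)
    (e : List ℕ → I) (g : List ℕ → List ℕ → V)
    (hsymm : ∀ a ∈ leaves k T, ∀ b ∈ leaves k T, a ≠ b → g a b = g b a)
    (hedg : ∀ a ∈ leaves k T, ∀ b ∈ leaves k T, ∀ c ∈ leaves k T,
      a ≠ b → a ≠ c → b ≠ c → (lcis a b).length = (lcis a c).length →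
      (lcis a b).length < (lcis b c).length →
      A.Edg (e a) (e b) (e c) (g a b) (g a c) (g b c))
    {a b c : List ℕ} (ha : a ∈ leaves k T) (hb : b ∈ leaves k T) (hc : c ∈ leaves k T)
    (hab : a ≠ b) (hac : a ≠ c) (hbc : b ≠ c) :
    A.Edg (e a) (e b) (e c) (g a b) (g a c) (g b c) := by
  rcases hT.lcis_trichotomy ha hb hc hab with h | h | h
  · exact hedg a ha b hb c hc hab hac hbc h.1 h.2
  · have := A.Edg_symm12 _ _ _ _ _ _ (hedg b hb a ha c hc hab.symm hbc hac h.1 h.2)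
    rwa [hsymm b hb a ha hab.symm] at this
  · have := A.Edg_symm23 _ _ _ _ _ _
      (A.Edg_symm12 _ _ _ _ _ _ (hedg c hc a ha b hb hac.symm hbc.symm hab h.1 h.2))
    rwa [hsymm c hc a ha hac.symm, hsymm c hc b hb hbc.symm] at this

end IsMAryTree

theorem ReducedHypergraph.hasClique_of_injOn {I V α : Type*} [Nonempty α]
    (A : ReducedHypergraph I V) {L : Set α} (hL : L.Finite) {e : α → I} (he : InjOn e L)
    (g : α → α → V) (hsymm : ∀ a ∈ L, ∀ b ∈ L, a ≠ b → g a b = g b a)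
    (hmem : ∀ a ∈ L, ∀ b ∈ L, a ≠ b → g a b ∈ A.P (e a) (e b))
    (hedg : ∀ a ∈ L, ∀ b ∈ L, ∀ c ∈ L, a ≠ b → a ≠ c → b ≠ c →
      A.Edg (e a) (e b) (e c) (g a b) (g a c) (g b c)) :
    HasClique A L.ncard := by
  classical
  set J := hL.toFinset.image e
  have hJ : ∀ i, i ∈ J ↔ ∃ a ∈ L, e a = i := by simp [J]
  set f : I → I → V := fun i j => if i ∈ J ∧ j ∈ J ∧ i ≠ j then
    g (Function.invFunOn e L i) (Function.invFunOn e L j)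
    else g (Classical.arbitrary α) (Classical.arbitrary α)
  have hf : ∀ a ∈ L, ∀ b ∈ L, a ≠ b → f (e a) (e b) = g a b := fun a ha b hb hab => by
    simp only [f]
    rw [if_pos ⟨(hJ _).mpr ⟨a, ha, rfl⟩, (hJ _).mpr ⟨b, hb, rfl⟩, he.ne ha hb hab⟩,
      he.leftInvOn_invFunOn ha, he.leftInvOn_invFunOn hb]
  refine ⟨J, f, ?_, fun i j => ?_, ?_, ?_⟩
  · rw [Finset.card_image_of_injOn (by simpa using he), ncard_eq_toFinset_card L hL]
  · by_cases h : i ∈ J ∧ j ∈ J ∧ i ≠ j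
    · obtain ⟨hi, hj, hij⟩ := h
      obtain ⟨a, ha, rfl⟩ := (hJ i).mp hi
      obtain ⟨b, hb, rfl⟩ := (hJ j).mp hj
      have hab : a ≠ b := fun h => hij (h ▸ rfl)
      rw [hf a ha b hb hab, hf b hb a ha hab.symm, hsymm a ha b hb hab]
    · simp only [f]
      rw [if_neg h, if_neg fun h' => h ⟨h'.2.1, h'.1, h'.2.2.symm⟩]
  · simp only [hJ]
    rintro _ ⟨a, ha, rfl⟩ _ ⟨b, hb, rfl⟩ hij
    have hab : a ≠ b := fun h => hij (h ▸ rfl)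
    rw [hf a ha b hb hab]
    exact hmem a ha b hb hab
  · simp only [hJ]
    rintro _ ⟨a, ha, rfl⟩ _ ⟨b, hb, rfl⟩ _ ⟨c, hc, rfl⟩ hij hik hjk
    have hab : a ≠ b := fun h => hij (h ▸ rfl)
    have hac : a ≠ c := fun h => hik (h ▸ rfl)
    have hbc : b ≠ c := fun h => hjk (h ▸ rfl)
    rw [hf a ha b hb hab, hf a ha c hc hac, hf b hb c hc hbc]
    exact hedg a ha b hb c hc hab hac hbc

theorem SupportsFortress.hasClique {I V : Type*} {A : ReducedHypergraph I V} {k : ℕ}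
    {T : Set (List ℕ)} {e : List ℕ → I} (h : SupportsFortress A k 2 T e) :
    HasClique A (2 ^ k) := by
  obtain ⟨hT, he, Pv, hPv, hEdg⟩ := h
  choose! D hD using fun c (hc : c ∈ T) => hT.Qset_nonempty le_rfl hc
  have hlcis : ∀ a ∈ leaves k T, ∀ b, lcis a b ∈ T := fun a ha b =>
    hT.mem_of_prefix ha.1 (lcis_prefix_left a b)
  set g := fun a b => Pv a b (D (lcis a b))
  have hsymm : ∀ a ∈ leaves k T, ∀ b ∈ leaves k T, a ≠ b → g a b = g b a :=
    fun a ha b hb hab => by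
      simp only [g, (hPv a ha b hb hab _ (hD _ (hlcis a ha b))).2, lcis_comm a b]
  have hcanon : ∀ a ∈ leaves k T, ∀ b ∈ leaves k T, ∀ c ∈ leaves k T,
      a ≠ b → a ≠ c → b ≠ c → (lcis a b).length = (lcis a c).length →
      (lcis a b).length < (lcis b c).length →
      A.Edg (e a) (e b) (e c) (g a b) (g a c) (g b c) := by
    intro a ha b hb c hc hab hac hbc hlen hlt
    have hd := hD _ (hlcis b hb c)
    have hQ : D (lcis a b) = (D (lcis b c)).take (lcis a b).length :=
      hT.Qset_subsingleton (hlcis a ha b) (hD _ (hlcis a ha b)) (take_mem_Qset_lcis hlt hd)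
    simp only [g]
    rw [← lcis_eq_of_length_eq hlen, hQ]
    exact hEdg a ha b hb c hc hab hac hbc hlen hlt _ hd
      (hT.getD_eq_of_mem_Qset_lcis ha hb hab hlt hd)
  have hfin : (leaves k T).Finite := finite_of_encard_eq_coe hT.encard_leaves
  have hcard : (leaves k T).ncard = 2 ^ k := by simp [ncard_def, hT.encard_leaves]
  rw [← hcard]
  exact A.hasClique_of_injOn hfin he g hsymm
    (fun a ha b hb hab => (hPv a ha b hb hab _ (hD _ (hlcis a ha b))).1)
    fun a ha b hb c hc => hT.edg_of_edg_of_lcis A e g hsymm hcanon ha hb hc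

def completeTree (M k : ℕ) : Set (List ℕ) := {l | l.length ≤ k ∧ ∀ x ∈ l, x < M}

theorem isMAryTree_completeTree (M k : ℕ) : IsMAryTree M k (completeTree M k) := by
  refine ⟨by simp [completeTree], fun a ha => ha.1, ?_, fun a ha hlt => ?_⟩
  · intro a ha i _
    exact ⟨(List.length_take_le' _ _).trans ha.1,
      fun x hx => ha.2 x (List.mem_of_mem_take hx)⟩
  · have hchildren : {σ : ℕ | a ++ [σ] ∈ completeTree M k} = Iio M := by
      ext σ
      simp only [completeTree, mem_ofPred_eq, List.length_append, List.length_singleton,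
        List.mem_append, List.mem_singleton, mem_Iio]
      exact ⟨fun h => h.2 σ (Or.inr rfl),
        fun h => ⟨by omega, by rintro x (hx | rfl); exacts [ha.2 x hx, h]⟩⟩
    rw [hchildren]
    exact ⟨finite_Iio M, by simp⟩

theorem HasClique.containsFortress {I V : Type*} {A : ReducedHypergraph I V} {M k : ℕ}
    (hM : 0 < M) (h : HasClique A (M ^ k)) : ContainsFortress A k M := by
  obtain ⟨J, f, hJ, hfsymm, hfmem, hfedg⟩ := h
  have hT := isMAryTree_completeTree M k
  obtain ⟨i, -⟩ := Finset.card_pos.mp (hJ ▸ pow_pos hM k)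
  have : Nonempty I := ⟨i⟩
  obtain ⟨e, hmaps, he⟩ := (finite_of_encard_eq_coe hT.encard_leaves).exists_injOn_of_encard_le
    (t := (J : Set I)) (by rw [hT.encard_leaves, encard_coe_eq_coe_finsetCard, hJ])
  refine ⟨completeTree M k, e, hT, he, fun a b _ => f (e a) (e b),
    fun a ha b hb hab _ _ => ⟨hfmem _ (hmaps ha) _ (hmaps hb) (he.ne ha hb hab), hfsymm _ _⟩,
    fun a ha b hb c hc hab hac hbc _ _ _ _ _ => hfedg _ (hmaps ha) _ (hmaps hb) _ (hmaps hc)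
      (he.ne ha hb hab) (he.ne ha hc hac) (he.ne hb hc hbc)⟩

theorem stmt9_general {I V : Type*} (A : ReducedHypergraph I V) (r : ℕ) :
    ContainsFortress A r 2 ↔ HasClique A (2 ^ r) :=
  ⟨fun ⟨_, _, h⟩ => h.hasClique, HasClique.containsFortress two_pos⟩

theorem stmt9 {I V : Type*} (A : ReducedHypergraph I V) (r : ℕ) (hr : 2 ≤ r) :
    ContainsFortress A r 2 ↔ HasClique A (2 ^ r) :=
  stmt9_general A r
end

section
/- Let r, m ≥ 2 be integers and ε > 0. Suppose X_0, X_1, …, X_{r−1} are pairwise disjoint subsets of the index set of a reduced hypergraph A, where |X_0| = m, and for each j ∈ [r−1] the collection C_j = {P^{xy} : x ∈ X_0, y ∈ X_j} is a ((r−2)/(r−1) + ε)-admissible (X_0, X_j)-selection. Then there exists a collection C = {P^{xx'} ∈ P^{xx'} : x, x' ∈ X_0, x ≠ x'} such that for every j ∈ [r−1], the set Y_j(C) = {y ∈ X_j : {P^{xx'}, P^{xy}, P^{x'y}} ∈ E(A^{xx'y}) for all distinct x, x' ∈ X_0} satisfies |Y_j(C)| ≥ (ε/2)^{C(m,2)}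 · |X_j|, where C(m,2) = m(m−1)/2. -/
/-- A `d`-admissible `(X, Y)`-selection: vertices `C x y ∈ P x y` for `x ∈ X`, `y ∈ Y`
such that for all distinct `x, x' ∈ X` and every `y ∈ Y`, the pair-degree of `C x y`
and `C x' y` in `P x x'` is at least `d·|P x x'|`. -/
def Admissible {I V : Type*} (A : ReducedHypergraph I V) (d : ℝ)
    (X Y : Set I) (C : I → I → V) : Prop :=
  (∀ x ∈ X, ∀ y ∈ Y, C x y ∈ A.P x y) ∧
  (∀ x ∈ X, ∀ x' ∈ X, x ≠ x' → ∀ y ∈ Y,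
    d * ((A.P x x').ncard : ℝ) ≤
      (({p ∈ A.P x x' | A.Edg x x' y p (C x y) (C x' y)}).ncard : ℝ))

open Finset

theorem mul_card_le_sum_card_filter_div {α β : Type*} {P : Finset α} {Y : Finset β}
    (hY : Y.Nonempty) (R : β → α → Prop) [∀ y p, Decidable (R y p)] {d : ℝ}
    (hdeg : ∀ y ∈ Y, d * #P ≤ #{p ∈ P | R y p}) :
    d * #P ≤ ∑ p ∈ P, (#{y ∈ Y | R y p} : ℝ) / #Y := by
  rw [← sum_div, le_div_iff₀ (mod_cast hY.card_pos)]
  calc d * #P * #Y = ∑ _y ∈ Y, d * #P := by rw [sum_const, nsmul_eq_mul]; ring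
    _ ≤ ∑ y ∈ Y, (#{p ∈ P | R y p} : ℝ) := sum_le_sum hdeg
    _ = ∑ p ∈ P, (#{y ∈ Y | R y p} : ℝ) := by
      exact_mod_cast (sum_card_bipartiteAbove_eq_sum_card_bipartiteBelow (fun p y => R y p)).symm

theorem exists_mem_forall_mul_card_le_card_filter {α β ι : Type*} {P : Finset α}
    (hP : P.Nonempty) {J : Finset ι} {Y : ι → Finset β} (R : ι → β → α → Prop)
    [∀ j y p, Decidable (R j y p)] {d δ : ℝ} (hJ : #J * (1 - d) ≤ 1 - δ)
    (hdeg : ∀ j ∈ J, ∀ y ∈ Y j, d * #P ≤ #{p ∈ P | R j y p}) :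
    ∃ p ∈ P, ∀ j ∈ J, δ * #(Y j) ≤ #{y ∈ Y j | R j y p} := by
  classical
  set J' := {j ∈ J | (Y j).Nonempty}
  set w : ι → α → ℝ := fun j p => #{y ∈ Y j | R j y p} / #(Y j)
  have hw_le_one : ∀ j p, w j p ≤ 1 := fun j p =>
    div_le_one_of_le₀ (mod_cast card_filter_le _ _) (Nat.cast_nonneg _)
  obtain ⟨p, hp, hpw⟩ : ∃ p ∈ P, #J' * d ≤ ∑ j ∈ J', w j p := by
    refine exists_le_of_sum_le hP ?_
    rw [sum_comm, sum_const, nsmul_eq_mul]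
    calc #P * (#J' * d) = ∑ _j ∈ J', d * #P := by rw [sum_const, nsmul_eq_mul]; ring
      _ ≤ _ := sum_le_sum fun j hj => mul_card_le_sum_card_filter_div (mem_filter.1 hj).2
        (R j) (hdeg j (mem_filter.1 hj).1)
  refine ⟨p, hp, fun j hj => ?_⟩
  obtain hY | hY := (Y j).eq_empty_or_nonempty
  · simp [hY]
  have hj' : j ∈ J' := mem_filter.2 ⟨hj, hY⟩
  have hd : d ≤ 1 := by
    obtain ⟨y, hy⟩ := hY
    have hPpos : (0 : ℝ) < #P := mod_cast hP.card_pos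
    have : (#{p ∈ P | R j y p} : ℝ) ≤ #P := mod_cast card_filter_le _ _
    nlinarith [hdeg j hj y hy]
  have hJ' : (#J' : ℝ) ≤ #J := mod_cast card_le_card (filter_subset _ _)
  have hrest : ∑ j' ∈ J'.erase j, w j' p ≤ #(J'.erase j) := by
    simpa using sum_le_card_nsmul _ _ 1 fun j' _ => hw_le_one j' p
  have hcard : (#(J'.erase j) : ℝ) + 1 = #J' := mod_cast card_erase_add_one hj'
  rw [← add_sum_erase _ _ hj'] at hpw
  have : δ ≤ w j p := by nlinarith
  exact (le_div_iff₀ (mod_cast hY.card_pos)).1 this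

theorem exists_forall_pow_mul_ncard_le {E V β ι : Type*} [DecidableEq E] {J : Finset ι}
    {X : ι → Set β} (Ch : E → Set V) (G : ι → E → V → β → Prop) {δ : ℝ} (hδ : 0 ≤ δ)
    (c₀ : E → V) (S : Finset E)
    (step : ∀ e ∈ S, ∀ Y : ι → Set β, (∀ j ∈ J, Y j ⊆ X j) →
      ∃ p ∈ Ch e, ∀ j ∈ J, δ * (Y j).ncard ≤ ({y ∈ Y j | G j e p y}).ncard) :
    ∃ c : E → V, (∀ e ∈ S, c e ∈ Ch e) ∧
      ∀ j ∈ J, δ ^ #S * (X j).ncard ≤ ({y ∈ X j | ∀ e ∈ S, G j e (c e) y}).ncard := by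
  induction S using Finset.induction_on with
  | empty => exact ⟨c₀, by simp, fun j _ => by simp⟩
  | @insert e S he ih =>
    obtain ⟨c, hcS, hc⟩ := ih fun e' he' => step e' (mem_insert_of_mem he')
    obtain ⟨p, hp, hpY⟩ := step e (mem_insert_self e S)
      (fun j => {y ∈ X j | ∀ e' ∈ S, G j e' (c e') y}) fun j _ => Set.sep_subset _ _
    have hupdate : ∀ e' ∈ S, Function.update c e p e' = c e' := fun e' he' =>
      Function.update_of_ne (ne_of_mem_of_not_mem he' he) _ _
    refine ⟨Function.update c e p, forall_mem_insert _ _ _ |>.2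
      ⟨by simpa using hp, fun e' he' => (hupdate e' he').symm ▸ hcS e' he'⟩, fun j hj => ?_⟩
    have hset : {y ∈ X j | ∀ e' ∈ insert e S, G j e' (Function.update c e p e') y} =
        {y ∈ {y ∈ X j | ∀ e' ∈ S, G j e' (c e') y} | G j e p y} := by
      ext y
      simp +contextual [hupdate, and_comm, and_assoc]
    rw [hset, card_insert_of_notMem he, pow_succ, mul_comm _ δ, mul_assoc]
    exact (mul_le_mul_of_nonneg_left (hc j hj) hδ).trans (hpY j hj)

theorem Set.Finite.ncard_sep {α : Type*} {s : Set α} (hs : s.Finite) (q : α → Prop)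
    [DecidablePred q] : ({x ∈ s | q x}).ncard = #{x ∈ hs.toFinset | q x} := by
  rw [← Set.ncard_coe_finset, coe_filter]
  simp_rw [hs.mem_toFinset]

namespace ReducedHypergraph

variable {I V : Type*} (A : ReducedHypergraph I V)

theorem exists_mem_forall_mul_ncard_le {ι : Type*} {d δ : ℝ} {J : Finset ι}
    (hJ : #J * (1 - d) ≤ 1 - δ) {X₀ : Set I} {X Y : ι → Set I} {Cs : ι → I → I → V}
    (hadm : ∀ j ∈ J, Admissible A d X₀ (X j) (Cs j)) {a b : I} (ha : a ∈ X₀) (hb : b ∈ X₀)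
    (hab : a ≠ b) (hYX : ∀ j ∈ J, Y j ⊆ X j) (hY : ∀ j ∈ J, (Y j).Finite) :
    ∃ p ∈ A.P a b, ∀ j ∈ J,
      δ * (Y j).ncard ≤ ({y ∈ Y j | A.Edg a b y p (Cs j a y) (Cs j b y)}).ncard := by
  classical
  obtain ⟨p, hp, hpY⟩ := exists_mem_forall_mul_card_le_card_filter
    ((A.Pfin a b).toFinset_nonempty.2 (A.Pne a b hab)) (J := (univ : Finset J))
    (Y := fun j => (hY j j.2).toFinset) (fun j y p => A.Edg a b y p (Cs j a y) (Cs j b y))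
    (by simpa using hJ) fun j _ y hy => by
      have hdeg := (hadm j j.2).2 a ha b hb hab y (hYX j j.2 ((hY j j.2).mem_toFinset.1 hy))
      rwa [Set.ncard_eq_toFinset_card _ (A.Pfin a b), (A.Pfin a b).ncard_sep] at hdeg
  refine ⟨p, (A.Pfin a b).mem_toFinset.1 hp, fun j hj => ?_⟩
  rw [Set.ncard_eq_toFinset_card _ (hY j hj), (hY j hj).ncard_sep]
  exact hpY ⟨j, hj⟩ (mem_univ _)

def Linked (C : I → I → V) (p : V) (y : I) : Sym2 I → Prop :=
  Sym2.lift ⟨fun x x' => A.Edg x x' y p (C x y) (C x' y),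
    fun _ _ => propext ⟨A.Edg_symm12 _ _ _ _ _ _, A.Edg_symm12 _ _ _ _ _ _⟩⟩

end ReducedHypergraph

theorem card_Icc_mul_one_sub_le {r : ℕ} (hr : 2 ≤ r) {ε : ℝ} (hε : 0 ≤ ε) :
    #(Icc 1 (r - 1)) * (1 - (((r : ℝ) - 2) / ((r : ℝ) - 1) + ε)) ≤ 1 - ε / 2 := by
  have hr' : (1 : ℝ) ≤ r - 1 := by
    have : (2 : ℝ) ≤ r := mod_cast hr
    linarith
  rw [Nat.card_Icc, Nat.add_sub_cancel, Nat.cast_sub (by omega), Nat.cast_one,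
    mul_sub, mul_add, mul_div_cancel₀ _ (by linarith)]
  nlinarith

theorem stmt11_general {I V : Type*} (A : ReducedHypergraph I V) (r m : ℕ)
    (hr : 2 ≤ r) (ε : ℝ) (hε : 0 < ε)
    (X : ℕ → Set I) (hfin : ∀ j ≤ r - 1, (X j).Finite)
    (hX0 : (X 0).ncard = m)
    (Cs : ℕ → I → I → V)
    (hadm : ∀ j, 1 ≤ j → j ≤ r - 1 →
      Admissible A (((r : ℝ) - 2) / ((r : ℝ) - 1) + ε) (X 0) (X j) (Cs j)) :
    ∃ C : I → I → V,
      (∀ x ∈ X 0, ∀ x' ∈ X 0, x ≠ x' → C x x' ∈ A.P x x' ∧ C x x' = C x' x) ∧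
      ∀ j, 1 ≤ j → j ≤ r - 1 →
        (ε / 2) ^ (m * (m - 1) / 2) * ((X j).ncard : ℝ) ≤
          (({y ∈ X j | ∀ x ∈ X 0, ∀ x' ∈ X 0, x ≠ x' →
              A.Edg x x' y (C x x') (Cs j x y) (Cs j x' y)}).ncard : ℝ) := by
  classical
  have hX₀ := hfin 0 (Nat.zero_le _)
  set S := hX₀.toFinset.offDiag.image Sym2.mk.uncurry
  have hS : #S = m * (m - 1) / 2 := by
    rw [Sym2.card_image_offDiag, Nat.choose_two_right, ← Set.ncard_eq_toFinset_card _ hX₀, hX0]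
  have hmem : ∀ x ∈ X 0, ∀ x' ∈ X 0, x ≠ x' → s(x, x') ∈ S := fun x hx x' hx' hne =>
    mem_image_of_mem _ (mem_offDiag.2 ⟨hX₀.mem_toFinset.2 hx, hX₀.mem_toFinset.2 hx', hne⟩)
  obtain ⟨c, hcP, hcY⟩ := exists_forall_pow_mul_ncard_le (J := Icc 1 (r - 1)) (X := X)
    (Sym2.lift ⟨A.P, A.Psymm⟩) (fun j e p y => A.Linked (Cs j) p y e) (half_pos hε).le
    -- any initial selection will do; `V` may be empty, so it is read off `Cs`
    (fun e => Cs 0 e.out.1 e.out.2) S fun e he Y hYX => by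
      obtain ⟨⟨a, b⟩, hab, rfl⟩ := mem_image.1 he
      obtain ⟨ha, hb, hne⟩ := mem_offDiag.1 hab
      exact A.exists_mem_forall_mul_ncard_le (card_Icc_mul_one_sub_le hr hε.le)
        (fun j hj => hadm j (mem_Icc.1 hj).1 (mem_Icc.1 hj).2)
        (hX₀.mem_toFinset.1 ha) (hX₀.mem_toFinset.1 hb) hne hYX
        fun j hj => (hfin j (mem_Icc.1 hj).2).subset (hYX j hj)
  refine ⟨fun x x' => c s(x, x'), fun x hx x' hx' hne =>
    ⟨hcP _ (hmem x hx x' hx' hne), congrArg c Sym2.eq_swap⟩, fun j hj₁ hj₂ => ?_⟩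
  rw [← hS]
  refine (hcY j (mem_Icc.2 ⟨hj₁, hj₂⟩)).trans
    (mod_cast Set.ncard_le_ncard ?_ ((hfin j hj₂).subset (Set.sep_subset _ _)))
  exact fun y ⟨hy, hlinked⟩ => ⟨hy, fun x hx x' hx' hne => hlinked _ (hmem x hx x' hx' hne)⟩

theorem stmt11 {I V : Type*} (A : ReducedHypergraph I V) (r m : ℕ)
    (hr : 2 ≤ r) (hm : 2 ≤ m) (ε : ℝ) (hε : 0 < ε)
    (X : ℕ → Set I) (hfin : ∀ j ≤ r - 1, (X j).Finite)
    (hdisj : ∀ j ≤ r - 1, ∀ j' ≤ r - 1, j ≠ j' → Disjoint (X j) (X j'))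
    (hX0 : (X 0).ncard = m)
    (Cs : ℕ → I → I → V)
    (hadm : ∀ j, 1 ≤ j → j ≤ r - 1 →
      Admissible A (((r : ℝ) - 2) / ((r : ℝ) - 1) + ε) (X 0) (X j) (Cs j)) :
    ∃ C : I → I → V,
      (∀ x ∈ X 0, ∀ x' ∈ X 0, x ≠ x' → C x x' ∈ A.P x x' ∧ C x x' = C x' x) ∧
      ∀ j, 1 ≤ j → j ≤ r - 1 →
        (ε / 2) ^ (m * (m - 1) / 2) * ((X j).ncard : ℝ) ≤
          (({y ∈ X j | ∀ x ∈ X 0, ∀ x' ∈ X 0, x ≠ x' →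
              A.Edg x x' y (C x x') (Cs j x y) (Cs j x' y)}).ncard : ℝ) :=
  stmt11_general A r m hr ε hε X hfin hX0 Cs hadm
end

section
/- Let P = (X ∪ Y ∪ Z, E) be a tripartite graph in which each of the three bipartite graphs P[X,Y], P[X,Z], P[Y,Z] is (δ₂, d₂)-regular. Then the number of triangles satisfies |K₃(P)| ≤ d₂³·|X||Y||Z| + 3δ₂·|X||Y||Z|. -/
/-!
Fix `x ∈ X`. The triangles through `x` are the edges of `P[Y, Z]` between the neighbourhoods
`N_Y(x)` and `N_Z(x)`, so regularity of `P[Y, Z]` gives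
`|K₃| ≤ d Σₓ |N_Y(x)||N_Z(x)| + δ|X||Y||Z|`. The sum counts paths `y – x – z`; grouping them by `z`
and applying regularity of `P[X, Y]` to `N_X(z) × Y` bounds it by `d|Y| e(X, Z) + δ|X||Y||Z|`,
and regularity of `P[X, Z]` gives `e(X, Z) ≤ (d + δ)|X||Z|`. Altogether
`|K₃| ≤ (d³ + d²δ + dδ + δ)|X||Y||Z|`, and `d ≤ 1`.
-/

/-- A bipartite graph between the finite vertex sets `X` and `Y`, given by the adjacency
relation `E`, is `(δ, d)`-regular if for all `X' ⊆ X` and `Y' ⊆ Y` the number of edges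
between `X'` and `Y'` differs from `d·|X'|·|Y'|` by at most `δ·|X|·|Y|`. -/
def BipRegular {X Y : Type*} [Fintype X] [Fintype Y] (δ d : ℝ) (E : X → Y → Prop) : Prop :=
  ∀ X' : Set X, ∀ Y' : Set Y,
    |(({p : X × Y | p.1 ∈ X' ∧ p.2 ∈ Y' ∧ E p.1 p.2}).ncard : ℝ) -
        d * (X'.ncard : ℝ) * (Y'.ncard : ℝ)| ≤
      δ * (Fintype.card X : ℝ) * (Fintype.card Y : ℝ)

open Finset
open scoped Classical

theorem Set.ncard_eq_sum_ite {α R : Type*} [Fintype α] [AddCommMonoidWithOne R] (s : Set α)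
    [DecidablePred (· ∈ s)] : (s.ncard : R) = ∑ a, if a ∈ s then 1 else 0 := by
  simp only [sum_boole, Set.ncard_eq_toFinset_card', Set.toFinset_card, Fintype.card_ofFinset]

namespace BipRegular

variable {X Y Z : Type*} [Fintype X] [Fintype Y] [Fintype Z] {δ d : ℝ}

theorem sum_sum_ite_and_le {E : X → Y → Prop} (h : BipRegular δ d E)
    (P : X → Prop) (Q : Y → Prop) :
    ∑ x, ∑ y, (if P x ∧ Q y ∧ E x y then 1 else 0) ≤
      d * (∑ x, if P x then 1 else 0) * (∑ y, if Q y then 1 else 0) +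
        δ * Fintype.card X * Fintype.card Y := by
  have hPQ := (abs_le.mp (h {x | P x} {y | Q y})).2
  simp only [Set.ncard_eq_sum_ite, Fintype.sum_prod_type, Set.mem_ofPred_eq] at hPQ
  linarith

theorem sum_sum_ite_le {E : X → Y → Prop} (h : BipRegular δ d E) :
    ∑ x, ∑ y, (if E x y then 1 else 0) ≤ (d + δ) * Fintype.card X * Fintype.card Y := by
  simpa [add_mul] using h.sum_sum_ite_and_le (fun _ => True) (fun _ => True)

theorem sum_triangles_le {Exy : X → Y → Prop} {Exz : X → Z → Prop}
    {Eyz : Y → Z → Prop} (hyz : BipRegular δ d Eyz) :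
    ∑ x, ∑ y, ∑ z, (if Exy x y ∧ Exz x z ∧ Eyz y z then 1 else 0) ≤
      d * ∑ x, (∑ y, if Exy x y then 1 else 0) * (∑ z, if Exz x z then 1 else 0) +
        δ * Fintype.card X * Fintype.card Y * Fintype.card Z := by
  calc _ ≤ ∑ x : X, (d * ((∑ y, if Exy x y then 1 else 0) * (∑ z, if Exz x z then 1 else 0)) +
          δ * Fintype.card Y * Fintype.card Z) :=
        sum_le_sum fun x _ => (hyz.sum_sum_ite_and_le (Exy x) (Exz x)).trans_eq (by ring)
    _ = _ := by
      rw [sum_add_distrib, ← mul_sum, sum_const, card_univ, nsmul_eq_mul]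
      ring

theorem sum_degree_mul_degree_le {Exy : X → Y → Prop} {Exz : X → Z → Prop}
    (hxy : BipRegular δ d Exy) :
    ∑ x, (∑ y, if Exy x y then 1 else 0) * (∑ z, if Exz x z then 1 else 0) ≤
      d * Fintype.card Y * ∑ x, ∑ z, (if Exz x z then 1 else 0) +
        δ * Fintype.card X * Fintype.card Y * Fintype.card Z := by
  have hz (z : Z) : ∑ x, ∑ y, (if Exz x z ∧ Exy x y then 1 else 0) ≤
      d * Fintype.card Y * ∑ x, (if Exz x z then 1 else 0) +
        δ * Fintype.card X * Fintype.card Y := by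
    have := hxy.sum_sum_ite_and_le (Exz · z) (fun _ => True)
    simp only [true_and, if_true, sum_const, card_univ, nsmul_eq_mul, mul_one] at this
    linarith
  calc _ = ∑ z, ∑ x, ∑ y, (if Exz x z ∧ Exy x y then 1 else 0) := by
        rw [sum_comm]
        refine sum_congr rfl fun x _ => ?_
        rw [mul_comm, sum_mul_sum]
        simp only [ite_zero_mul_ite_zero, mul_one]
    _ ≤ ∑ z : Z, (d * Fintype.card Y * ∑ x, (if Exz x z then 1 else 0) +
          δ * Fintype.card X * Fintype.card Y) := sum_le_sum fun z _ => hz z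
    _ = _ := by
      rw [sum_add_distrib, ← mul_sum, sum_comm, sum_const, card_univ, nsmul_eq_mul]
      ring

end BipRegular

theorem stmt18 {X Y Z : Type*} [Fintype X] [Fintype Y] [Fintype Z]
    (δ d : ℝ) (hδ : 0 ≤ δ) (hd0 : 0 ≤ d) (hd1 : d ≤ 1)
    (Exy : X → Y → Prop) (Exz : X → Z → Prop) (Eyz : Y → Z → Prop)
    (hxy : BipRegular δ d Exy) (hxz : BipRegular δ d Exz) (hyz : BipRegular δ d Eyz) :
    (({t : X × Y × Z | Exy t.1 t.2.1 ∧ Exz t.1 t.2.2 ∧ Eyz t.2.1 t.2.2}).ncard : ℝ) ≤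
      d ^ 3 * (Fintype.card X : ℝ) * (Fintype.card Y : ℝ) * (Fintype.card Z : ℝ) +
        3 * δ * (Fintype.card X : ℝ) * (Fintype.card Y : ℝ) * (Fintype.card Z : ℝ) := by
  set nX := (Fintype.card X : ℝ)
  set nY := (Fintype.card Y : ℝ)
  set nZ := (Fintype.card Z : ℝ)
  rw [Set.ncard_eq_sum_ite]
  simp only [Fintype.sum_prod_type, Set.mem_ofPred_eq]
  calc _ ≤ _ := hyz.sum_triangles_le (Exy := Exy) (Exz := Exz)
    _ ≤ d * (d * nY * ∑ x, ∑ z, (if Exz x z then 1 else 0) + δ * nX * nY * nZ) +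
          δ * nX * nY * nZ := by
        gcongr; exact hxy.sum_degree_mul_degree_le
    _ ≤ d * (d * nY * ((d + δ) * nX * nZ) + δ * nX * nY * nZ) + δ * nX * nY * nZ := by
        gcongr; exact hxz.sum_sum_ite_le
    _ ≤ _ := by
        have hδN : 0 ≤ δ * nX * nY * nZ := by positivity
        nlinarith [mul_le_mul_of_nonneg_right hd1 hδN,
          mul_le_mul_of_nonneg_right (mul_le_one₀ hd1 hd0 hd1) hδN]
end
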